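/- arXiv:2511.00008 — 3 statements merged into one kernel-verified Lean document; each statement's English description precedes it below -/
import Mathlib

section
/- Let γ > 1 be a real number and set c_V = 1/(γ−1). The internal energy density function (ρ, S) ↦ c_V · ρ^γ · exp(S/(c_V ρ)) is convex on the set {(ρ, S) ∈ ℝ × ℝ : ρ > 0}. -/
/-!
Write `c_V = 1/(γ-1)` and `b = (γ-1)/γ`. On `ρ > 0` the energy density equals
`c_V · (ρ exp (b S / ρ))^γ`. The inner function is the perspective of the convex function
`x ↦ exp (b x)`, hence convex and positive, and `t ↦ t^γ` is convex and nondecreasing on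
`[0, ∞)` for `γ ≥ 1`, so the composition is convex.
-/

open Real Set

theorem ConvexOn.comp_of_mapsTo {𝕜 E α β : Type*} [Semiring 𝕜] [PartialOrder 𝕜]
    [AddCommMonoid E] [AddCommMonoid α] [PartialOrder α] [AddCommMonoid β] [PartialOrder β]
    [SMul 𝕜 E] [SMul 𝕜 α] [SMul 𝕜 β] {s : Set E} {t : Set β} {f : E → β} {g : β → α}
    (hg : ConvexOn 𝕜 t g) (hf : ConvexOn 𝕜 s f) (hg' : MonotoneOn g t) (hst : MapsTo f s t) :
    ConvexOn 𝕜 s (g ∘ f) :=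
  ⟨hf.1, fun _ hx _ hy _ _ ha hb hab =>
    (hg' (hst <| hf.1 hx hy ha hb hab) (hg.1 (hst hx) (hst hy) ha hb hab)
      (hf.2 hx hy ha hb hab)).trans (hg.2 (hst hx) (hst hy) ha hb hab)⟩

section Perspective

variable {𝕜 E : Type*} [Field 𝕜] [AddCommGroup E] [Module 𝕜 E]

lemma inv_smul_add_eq_div_smul_add {t u a c : 𝕜} (ht : t ≠ 0) (hu : u ≠ 0)
    (hR : a * t + c * u ≠ 0) (x y : E) :
    (a * t + c * u)⁻¹ • (a • x + c • y)
      = (a * t / (a * t + c * u)) • t⁻¹ • x + (c * u / (a * t + c * u)) • u⁻¹ • y := by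
  rw [smul_add, smul_smul, smul_smul, smul_smul, smul_smul]
  congr 2 <;> field_simp

variable [LinearOrder 𝕜] [IsStrictOrderedRing 𝕜] {s : Set E} {f : E → 𝕜}

lemma ConvexOn.perspective_combination (hf : ConvexOn 𝕜 s f) {t u a c : 𝕜} {x y : E}
    (ht : 0 < t) (hx : t⁻¹ • x ∈ s) (hu : 0 < u) (hy : u⁻¹ • y ∈ s)
    (ha : 0 ≤ a) (hc : 0 ≤ c) (hac : a + c = 1) :
    0 < a * t + c * u ∧ (a * t + c * u)⁻¹ • (a • x + c • y) ∈ s ∧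
      (a * t + c * u) * f ((a * t + c * u)⁻¹ • (a • x + c • y))
        ≤ a * (t * f (t⁻¹ • x)) + c * (u * f (u⁻¹ • y)) := by
  set R := a * t + c * u with hR_def
  have hR : 0 < R := convex_Ioi 0 ht hu ha hc hac
  have hwa : 0 ≤ a * t / R := by positivity
  have hwc : 0 ≤ c * u / R := by positivity
  have hw : a * t / R + c * u / R = 1 := by field_simp; exact hR_def.symm
  rw [inv_smul_add_eq_div_smul_add ht.ne' hu.ne' hR.ne']
  refine ⟨hR, hf.1 hx hy hwa hwc hw, ?_⟩
  calc R * f ((a * t / R) • t⁻¹ • x + (c * u / R) • u⁻¹ • y)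
      ≤ R * ((a * t / R) • f (t⁻¹ • x) + (c * u / R) • f (u⁻¹ • y)) :=
        mul_le_mul_of_nonneg_left (hf.2 hx hy hwa hwc hw) hR.le
    _ = a * (t * f (t⁻¹ • x)) + c * (u * f (u⁻¹ • y)) := by
        simp only [smul_eq_mul]; field_simp

theorem ConvexOn.perspective (hf : ConvexOn 𝕜 s f) :
    ConvexOn 𝕜 {z : 𝕜 × E | 0 < z.1 ∧ z.1⁻¹ • z.2 ∈ s} (fun z => z.1 * f (z.1⁻¹ • z.2)) := by
  refine ⟨?_, ?_⟩
  · rintro ⟨t, x⟩ ⟨ht, hx⟩ ⟨u, y⟩ ⟨hu, hy⟩ a c ha hc hac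
    obtain ⟨hR, hmem, -⟩ := hf.perspective_combination ht hx hu hy ha hc hac
    exact ⟨by simpa using hR, by simpa using hmem⟩
  · rintro ⟨t, x⟩ ⟨ht, hx⟩ ⟨u, y⟩ ⟨hu, hy⟩ a c ha hc hac
    simpa using (hf.perspective_combination ht hx hu hy ha hc hac).2.2

end Perspective

lemma convexOn_mul_exp_mul_inv_mul (b : ℝ) :
    ConvexOn ℝ {z : ℝ × ℝ | 0 < z.1} (fun z => z.1 * exp (b * (z.1⁻¹ * z.2))) := by
  exact (convexOn_exp.comp_linearMap (b • LinearMap.id)).perspective.subset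
    (fun _ hz => ⟨hz, trivial⟩)
    ((convex_Ioi 0).linear_preimage (LinearMap.fst ℝ ℝ ℝ))

lemma mul_exp_rpow {ρ : ℝ} (hρ : 0 ≤ ρ) (x γ : ℝ) : (ρ * exp x) ^ γ = ρ ^ γ * exp (x * γ) := by
  rw [mul_rpow hρ (exp_pos x).le, ← exp_mul]

/-- With `γ > 1` and `c_V = 1/(γ-1)`, the internal energy density
`(ρ, S) ↦ c_V ρ^γ exp (S/(c_V ρ))` is convex on `{(ρ, S) : ρ > 0}`. -/
theorem stmt6 (γ : ℝ) (hγ : 1 < γ) :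
    ConvexOn ℝ {z : ℝ × ℝ | 0 < z.1}
      (fun z => (1 / (γ - 1)) * z.1 ^ γ * Real.exp (z.2 / ((1 / (γ - 1)) * z.1))) := by
  set b := (γ - 1) / γ
  have hpersp := convexOn_mul_exp_mul_inv_mul b
  have hcomp : ConvexOn ℝ {z : ℝ × ℝ | 0 < z.1}
      ((· ^ γ) ∘ fun z : ℝ × ℝ => z.1 * exp (b * (z.1⁻¹ * z.2))) :=
    (convexOn_rpow hγ.le).comp_of_mapsTo hpersp
      (monotoneOn_rpow_Ici_of_exponent_nonneg (by linarith)) fun z hz => (mul_pos hz (exp_pos _)).le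
  have hcV : 0 ≤ 1 / (γ - 1) := one_div_nonneg.2 (sub_pos.2 hγ).le
  refine (hcomp.smul hcV).congr fun z (hz : 0 < z.1) => ?_
  have hγ0 : γ ≠ 0 := by linarith
  have hγ1 : γ - 1 ≠ 0 := by linarith
  simp only [Function.comp_apply, smul_eq_mul, mul_exp_rpow hz.le, mul_assoc]
  congr 3
  simp only [b]
  field_simp
end

section
/- Let γ > 1 be a real number, c_V = 1/(γ−1), and M ≥ 1 a natural number. Let ρ₁,…,ρ_M be positive real numbers and S₁,…,S_M real numbers, and set ⟨ρ⟩ = (1/M)·Σ_{n=1}^M ρ_n and ⟨S⟩ = (1/M)·Σ_{n=1}^M S_n. Then (1/M)·Σ_{n=1}^M ρ_n^γ · exp(S_n/(c_V ρ_n)) ≥ ⟨ρ⟩^γ · exp(⟨S⟩/(c_V ⟨ρ⟩)). -/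
/-!
With `c = γ - 1` the pressure is `p(ρ, S) = ρ exp (c t)` for `t = log ρ + S / ρ`. Let `R`, `S̄` be
weighted means and `m = log R + S̄ / R`. Bounding `exp (c t)` below by its tangent line at `c m`
and averaging with weights `wᵢ ρᵢ`, the error term is
`c (∑ wᵢ ρᵢ tᵢ - m R) = c (∑ wᵢ ρᵢ log ρᵢ - R log R)`, which is nonnegative by Jensen's inequality
for the convex function `x log x`.
-/

open Finset Real

noncomputable def pressure (γ ρ S : ℝ) : ℝ := ρ ^ γ * exp (S / (1 / (γ - 1) * ρ))

lemma pressure_eq_mul_exp (γ S : ℝ) {ρ : ℝ} (hρ : 0 < ρ) :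
    pressure γ ρ S = ρ * exp ((γ - 1) * (log ρ + S / ρ)) := by
  have hdiv : S / (1 / (γ - 1) * ρ) = (γ - 1) * (S / ρ) := by
    rw [one_div, mul_comm _ ρ, ← div_div, div_inv_eq_mul, mul_comm]
  calc pressure γ ρ S = ρ ^ (1 + (γ - 1)) * exp ((γ - 1) * (S / ρ)) := by
        rw [pressure, hdiv, add_sub_cancel]
    _ = ρ * exp ((γ - 1) * (log ρ + S / ρ)) := by
        rw [rpow_add hρ, rpow_one, rpow_def_of_pos hρ, mul_assoc, ← exp_add, mul_comm (log ρ),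
          mul_add]

lemma exp_mul_one_add_sub_le_exp (a b : ℝ) : exp a * (1 + (b - a)) ≤ exp b := by
  calc exp a * (1 + (b - a)) ≤ exp a * exp (b - a) := by
        gcongr; linarith [add_one_le_exp (b - a)]
    _ = exp b := by rw [← exp_add, add_sub_cancel]

lemma sum_mul_pos_of_sum_eq_one {ι : Type*} {s : Finset ι} {w ρ : ι → ℝ}
    (hw : ∀ i ∈ s, 0 ≤ w i) (hw₁ : ∑ i ∈ s, w i = 1) (hρ : ∀ i ∈ s, 0 < ρ i) :
    0 < ∑ i ∈ s, w i * ρ i := by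
  obtain ⟨j, hj, hwj⟩ := exists_ne_zero_of_sum_ne_zero (hw₁ ▸ one_ne_zero)
  exact sum_pos' (fun i hi => mul_nonneg (hw i hi) (hρ i hi).le)
    ⟨j, hj, mul_pos ((hw j hj).lt_of_ne' hwj) (hρ j hj)⟩

theorem pressure_map_sum_le {ι : Type*} {γ : ℝ} (hγ : 1 ≤ γ) {s : Finset ι} {w ρ S : ι → ℝ}
    (hw : ∀ i ∈ s, 0 ≤ w i) (hw₁ : ∑ i ∈ s, w i = 1) (hρ : ∀ i ∈ s, 0 < ρ i) :
    pressure γ (∑ i ∈ s, w i * ρ i) (∑ i ∈ s, w i * S i)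
      ≤ ∑ i ∈ s, w i * pressure γ (ρ i) (S i) := by
  set R := ∑ i ∈ s, w i * ρ i
  set S' := ∑ i ∈ s, w i * S i
  set U := ∑ i ∈ s, w i * (ρ i * log (ρ i) + S i)
  set c := γ - 1
  set m := log R + S' / R
  have hc : 0 ≤ c := sub_nonneg.2 hγ
  have hR : 0 < R := sum_mul_pos_of_sum_eq_one hw hw₁ hρ
  have entropy : m * R ≤ U := by
    have jensen : R * log R ≤ ∑ i ∈ s, w i * (ρ i * log (ρ i)) :=
      convexOn_mul_log.map_sum_le hw hw₁ fun i hi => Set.mem_Ici.2 (hρ i hi).le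
    calc m * R = R * log R + S' := by rw [add_mul, div_mul_cancel₀ _ hR.ne', mul_comm]
      _ ≤ ∑ i ∈ s, w i * (ρ i * log (ρ i)) + S' := by gcongr
      _ = U := by simp only [U, S', mul_add, sum_add_distrib]
  have tangent : ∀ i ∈ s, exp (c * m) * ((1 - c * m) * ρ i + c * (ρ i * log (ρ i) + S i))
      ≤ pressure γ (ρ i) (S i) := by
    intro i hi
    have hρi := hρ i hi
    calc exp (c * m) * ((1 - c * m) * ρ i + c * (ρ i * log (ρ i) + S i))
        = ρ i * (exp (c * m) * (1 + (c * (log (ρ i) + S i / ρ i) - c * m))) := by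
          field_simp; ring
      _ ≤ ρ i * exp (c * (log (ρ i) + S i / ρ i)) := by
          gcongr; exact exp_mul_one_add_sub_le_exp _ _
      _ = pressure γ (ρ i) (S i) := (pressure_eq_mul_exp γ (S i) hρi).symm
  calc pressure γ R S' = exp (c * m) * ((1 - c * m) * R + c * (m * R)) := by
        rw [pressure_eq_mul_exp γ S' hR]; ring
    _ ≤ exp (c * m) * ((1 - c * m) * R + c * U) := by gcongr
    _ = ∑ i ∈ s, w i * (exp (c * m) * ((1 - c * m) * ρ i + c * (ρ i * log (ρ i) + S i))) := by
        simp only [R, U, mul_sum, ← sum_add_distrib]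
        exact sum_congr rfl fun i _ => by ring
    _ ≤ ∑ i ∈ s, w i * pressure γ (ρ i) (S i) :=
        sum_le_sum fun i hi => mul_le_mul_of_nonneg_left (tangent i hi) (hw i hi)

/-- Nonnegativity of the pressure part of the Cesàro-averaged Reynolds stress
defect: with `p(ρ,S) = ρ^γ exp(S/(c_V ρ))`, `γ > 1`, `c_V = 1/(γ-1)`,
`(1/M) Σ_n p(ρ_n,S_n) ≥ p(⟨ρ⟩,⟨S⟩)` where `⟨ρ⟩, ⟨S⟩` are arithmetic means. -/
theorem stmt7 (γ : ℝ) (hγ : 1 < γ) (M : ℕ) (hM : 1 ≤ M)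
    (ρ S : Fin M → ℝ) (hρ : ∀ n, 0 < ρ n) :
    let cV : ℝ := 1 / (γ - 1)
    let ρavg : ℝ := (M : ℝ)⁻¹ * ∑ n, ρ n
    let Savg : ℝ := (M : ℝ)⁻¹ * ∑ n, S n
    (M : ℝ)⁻¹ * ∑ n, (ρ n) ^ γ * Real.exp (S n / (cV * ρ n))
      ≥ ρavg ^ γ * Real.exp (Savg / (cV * ρavg)) := by
  have hM₀ : (M : ℝ) ≠ 0 := by positivity
  have hmean := pressure_map_sum_le hγ.le (s := univ) (w := fun _ => (M : ℝ)⁻¹) (S := S)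
    (fun _ _ => by positivity) (by simp [hM₀]) (fun n _ => hρ n)
  simp only [← mul_sum] at hmean
  exact hmean
end

section
/- Let γ > 1 be a real number, c_V = 1/(γ−1), d ≥ 1 and M ≥ 1 natural numbers, and let ρ₁,…,ρ_M > 0, m₁,…,m_M ∈ ℝ^d, S₁,…,S_M ∈ ℝ, with arithmetic means ⟨ρ⟩, ⟨m⟩, ⟨S⟩. Define the pressure p(ρ,S) = ρ^γ exp(S/(c_V ρ)), the approximate Reynolds stress defect 𝔑_M = (1/M)Σ_n (m_n⊗m_n)/ρ_n + ((1/M)Σ_n p(ρ_n,S_n))·I_d − (⟨m⟩⊗⟨m⟩)/⟨ρ⟩ − p(⟨ρ⟩,⟨S⟩)·I_d, and the approximate energy defect 𝔈_M = (1/M)Σ_n [ |m_n|²/(2ρ_n) + c_V ρ_n^γ exp(S_n/(c_V ρ_n)) ] − |⟨m⟩|²/(2⟨ρ⟩) − c_V ⟨ρ⟩^γ exp(⟨S⟩/(c_V ⟨ρ⟩)). Then min{2, d(γ−1)}·𝔈_M ≤ tr 𝔑_M ≤ max{2, d(γ−1)}·𝔈_M. -/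
/-!
Write `K` for the kinetic defect `⟨|m|²/ρ⟩ - |⟨m⟩|²/⟨ρ⟩` and `P` for the pressure defect
`⟨p(ρ,S)⟩ - p(⟨ρ⟩,⟨S⟩)`. Then `tr 𝔑_M = K + d P` and `𝔈_M = K/2 + c_V P`, i.e.
`tr 𝔑_M = 2 u + d(γ-1) v` and `𝔈_M = u + v` with `u = K/2`, `v = c_V P`, so both bounds hold
as soon as `K, P ≥ 0`. Both are Jensen inequalities: `K ≥ 0` is the Cauchy–Schwarz inequality
`(∑ mᵢ)²/∑ ρ ≤ ∑ mᵢ²/ρ`, and `P ≥ 0` because `p(ρ,S) = (ρ exp(S/(γ c_V ρ)))^γ` is the `γ`-th power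
of the perspective of `exp`, which is convex (Jensen with weights `ρₙ/∑ ρ`), and `t ↦ t^γ` is
convex and increasing.
-/

open Finset Real

section

variable {ι κ : Type*}

theorem sum_mul_exp_div_sum_le (s : Finset ι) (ρ x : ι → ℝ) (hρ : ∀ n ∈ s, 0 < ρ n) :
    (∑ n ∈ s, ρ n) * exp ((∑ n ∈ s, x n) / ∑ n ∈ s, ρ n) ≤ ∑ n ∈ s, ρ n * exp (x n / ρ n) := by
  rcases s.eq_empty_or_nonempty with rfl | hs
  · simp
  have hρs : 0 < ∑ n ∈ s, ρ n := sum_pos hρ hs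
  have hw₀ : ∀ n ∈ s, 0 ≤ ρ n / ∑ k ∈ s, ρ k := fun n hn => div_nonneg (hρ n hn).le hρs.le
  have hw₁ : ∑ n ∈ s, ρ n / ∑ k ∈ s, ρ k = 1 := by rw [← sum_div, div_self hρs.ne']
  have hmean : ∑ n ∈ s, ρ n / (∑ k ∈ s, ρ k) * (x n / ρ n) = (∑ n ∈ s, x n) / ∑ n ∈ s, ρ n := by
    rw [sum_div]
    exact sum_congr rfl fun n hn => by field_simp [(hρ n hn).ne']
  have hJensen := convexOn_exp.map_sum_le hw₀ hw₁ fun n _ => Set.mem_univ (x n / ρ n)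
  simp only [smul_eq_mul, hmean] at hJensen
  calc _ ≤ (∑ n ∈ s, ρ n) * ∑ n ∈ s, ρ n / (∑ k ∈ s, ρ k) * exp (x n / ρ n) := by gcongr
    _ = _ := by
      rw [mul_sum]
      exact sum_congr rfl fun n _ => by field_simp

theorem rpow_mul_exp_div_mul_eq {γ : ℝ} (hγ : γ ≠ 0) (b : ℝ) {r : ℝ} (hr : 0 ≤ r) (s : ℝ) :
    r ^ γ * exp (s / (b * r)) = (r * exp (s / (γ * b * r))) ^ γ := by
  rw [mul_rpow hr (exp_pos _).le, ← exp_mul, div_mul_eq_mul_div, mul_comm s γ, mul_assoc γ,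
    mul_div_mul_left _ _ hγ]

theorem min_mul_add_le {α β u v : ℝ} (hu : 0 ≤ u) (hv : 0 ≤ v) :
    min α β * (u + v) ≤ α * u + β * v := by
  nlinarith [mul_le_mul_of_nonneg_right (min_le_left α β) hu,
    mul_le_mul_of_nonneg_right (min_le_right α β) hv]

theorem mul_add_le_max_mul {α β u v : ℝ} (hu : 0 ≤ u) (hv : 0 ≤ v) :
    α * u + β * v ≤ max α β * (u + v) := by
  nlinarith [mul_le_mul_of_nonneg_right (le_max_left α β) hu,
    mul_le_mul_of_nonneg_right (le_max_right α β) hv]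

theorem Matrix.trace_of_mul_div {K : Type*} [Field K] [Fintype κ] (v : κ → K) (r : K) :
    (Matrix.of fun i j => v i * v j / r).trace = (∑ i, v i ^ 2) / r := by
  simp [Matrix.trace, sum_div, sq]

variable [Fintype ι] [Fintype κ]

theorem sum_sq_mul_sum_div_mul_sum_le {c : ℝ} (hc : 0 ≤ c) (ρ : ι → ℝ) (hρ : ∀ n, 0 < ρ n)
    (m : ι → κ → ℝ) :
    (∑ i, (c * ∑ n, m n i) ^ 2) / (c * ∑ n, ρ n) ≤ c * ∑ n, (∑ i, m n i ^ 2) / ρ n := by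
  rcases hc.eq_or_lt with rfl | hc
  · simp
  calc (∑ i, (c * ∑ n, m n i) ^ 2) / (c * ∑ n, ρ n)
      = c * ∑ i, (∑ n, m n i) ^ 2 / ∑ n, ρ n := by
        rw [sum_div, mul_sum univ (fun i => (∑ n, m n i) ^ 2 / ∑ n, ρ n) c]
        refine sum_congr rfl fun i _ => ?_
        rw [mul_pow, sq c, mul_assoc, mul_div_mul_left _ _ hc.ne', mul_div_assoc]
    _ ≤ c * ∑ i, ∑ n, m n i ^ 2 / ρ n := by
        gcongr with i
        exact sq_sum_div_le_sum_sq_div _ _ fun n _ => hρ n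
    _ = c * ∑ n, (∑ i, m n i ^ 2) / ρ n := by
        simp_rw [sum_div]
        rw [sum_comm]

theorem rpow_mul_exp_div_mul_average_le [Nonempty ι] {γ : ℝ} (hγ : 1 ≤ γ) (b : ℝ)
    (ρ S : ι → ℝ) (hρ : ∀ n, 0 < ρ n) :
    ((Fintype.card ι : ℝ)⁻¹ * ∑ n, ρ n) ^ γ
        * exp ((Fintype.card ι : ℝ)⁻¹ * (∑ n, S n) / (b * ((Fintype.card ι : ℝ)⁻¹ * ∑ n, ρ n)))
      ≤ (Fintype.card ι : ℝ)⁻¹ * ∑ n, ρ n ^ γ * exp (S n / (b * ρ n)) := by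
  set c : ℝ := (Fintype.card ι : ℝ)⁻¹
  have hc : 0 < c := by positivity
  have hγ₀ : γ ≠ 0 := by positivity
  have hρs : 0 < ∑ n, ρ n := sum_pos (fun n _ => hρ n) univ_nonempty
  set Z : ι → ℝ := fun n => ρ n * exp (S n / (γ * b * ρ n))
  have hperspective : (∑ n, ρ n) * exp ((∑ n, S n) / (γ * b * ∑ n, ρ n)) ≤ ∑ n, Z n := by
    simpa only [← sum_div, div_div] using
      sum_mul_exp_div_sum_le univ ρ (fun n => S n / (γ * b)) fun n _ => hρ n
  calc (c * ∑ n, ρ n) ^ γ * exp (c * (∑ n, S n) / (b * (c * ∑ n, ρ n)))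
      = (c * ((∑ n, ρ n) * exp ((∑ n, S n) / (γ * b * ∑ n, ρ n)))) ^ γ := by
        rw [rpow_mul_exp_div_mul_eq hγ₀ b (by positivity), mul_assoc,
          mul_left_comm (γ * b), mul_div_mul_left _ _ hc.ne']
    _ ≤ (∑ n, c * Z n) ^ γ := by
        rw [← mul_sum]
        gcongr
    _ ≤ ∑ n, c * Z n ^ γ :=
        rpow_arith_mean_le_arith_mean_rpow univ (fun _ => c) Z (fun _ _ => hc.le)
          (by simp [c]) (fun n _ => (mul_pos (hρ n) (exp_pos _)).le) hγ
    _ = c * ∑ n, ρ n ^ γ * exp (S n / (b * ρ n)) := by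
        rw [mul_sum]
        exact sum_congr rfl fun n _ => by rw [rpow_mul_exp_div_mul_eq hγ₀ b (hρ n).le]

end

theorem stmt9_general (γ : ℝ) (hγ : 1 < γ) (d M : ℕ) (hM : 1 ≤ M)
    (ρ : Fin M → ℝ) (hρ : ∀ n, 0 < ρ n)
    (m : Fin M → Fin d → ℝ) (S : Fin M → ℝ) :
    let cV : ℝ := 1 / (γ - 1)
    let p : ℝ → ℝ → ℝ := fun r s => r ^ γ * Real.exp (s / (cV * r))
    let ρavg : ℝ := (M : ℝ)⁻¹ * ∑ n, ρ n
    let mavg : Fin d → ℝ := fun i => (M : ℝ)⁻¹ * ∑ n, m n i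
    let Savg : ℝ := (M : ℝ)⁻¹ * ∑ n, S n
    let RM : Matrix (Fin d) (Fin d) ℝ :=
      (M : ℝ)⁻¹ • (∑ n, Matrix.of fun i j => m n i * m n j / ρ n)
        + ((M : ℝ)⁻¹ * ∑ n, p (ρ n) (S n)) • (1 : Matrix (Fin d) (Fin d) ℝ)
        - Matrix.of (fun i j => mavg i * mavg j / ρavg)
        - p ρavg Savg • (1 : Matrix (Fin d) (Fin d) ℝ)
    let EM : ℝ :=
      (M : ℝ)⁻¹ * ∑ n, ((∑ i, (m n i) ^ 2) / (2 * ρ n)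
          + cV * (ρ n) ^ γ * Real.exp (S n / (cV * ρ n)))
        - (∑ i, (mavg i) ^ 2) / (2 * ρavg)
        - cV * ρavg ^ γ * Real.exp (Savg / (cV * ρavg))
    min 2 ((d : ℝ) * (γ - 1)) * EM ≤ Matrix.trace RM ∧
      Matrix.trace RM ≤ max 2 ((d : ℝ) * (γ - 1)) * EM := by
  intro cV p ρavg mavg Savg RM EM
  have hM₀ : (0 : ℝ) ≤ (M : ℝ)⁻¹ := by positivity
  set K := (M : ℝ)⁻¹ * ∑ n, (∑ i, m n i ^ 2) / ρ n - (∑ i, mavg i ^ 2) / ρavg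
  set P := (M : ℝ)⁻¹ * ∑ n, p (ρ n) (S n) - p ρavg Savg
  have hK : 0 ≤ K := sub_nonneg.2 (sum_sq_mul_sum_div_mul_sum_le hM₀ ρ hρ m)
  have hP : 0 ≤ P := by
    have : Nonempty (Fin M) := ⟨⟨0, hM⟩⟩
    refine sub_nonneg.2 ?_
    simpa only [Fintype.card_fin] using rpow_mul_exp_div_mul_average_le hγ.le cV ρ S hρ
  have htrace : RM.trace = K + d * P := by
    simp only [RM, Matrix.trace_sub, Matrix.trace_add, Matrix.trace_smul, Matrix.trace_sum,
      Matrix.trace_of_mul_div, Matrix.trace_one, Fintype.card_fin, smul_eq_mul, K, P]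
    ring
  have henergy : EM = K / 2 + cV * P := by
    simp only [EM, K, P, p, sum_add_distrib, mul_add, div_mul_eq_div_div_swap, ← sum_div,
      mul_assoc cV, ← mul_sum]
    ring
  have hcV : cV * (γ - 1) = 1 := one_div_mul_cancel (sub_pos.2 hγ).ne'
  have hsplit : K + d * P = 2 * (K / 2) + d * (γ - 1) * (cV * P) := by
    linear_combination (-(d * P)) * hcV
  have hK₂ : 0 ≤ K / 2 := by linarith
  have hP₂ : 0 ≤ cV * P := mul_nonneg (one_div_pos.2 (sub_pos.2 hγ)).le hP
  rw [htrace, henergy, hsplit]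
  exact ⟨min_mul_add_le hK₂ hP₂, mul_add_le_max_mul hK₂ hP₂⟩

/-- Trace compatibility for the Cesàro-averaged defects: with pressure
`p(ρ,S) = ρ^γ exp(S/(c_V ρ))`, the approximate Reynolds stress defect `𝔑_M` and
approximate energy defect `𝔈_M` satisfy
`min{2, d(γ-1)}·𝔈_M ≤ tr 𝔑_M ≤ max{2, d(γ-1)}·𝔈_M`. -/
theorem stmt9 (γ : ℝ) (hγ : 1 < γ) (d M : ℕ) (hd : 1 ≤ d) (hM : 1 ≤ M)
    (ρ : Fin M → ℝ) (hρ : ∀ n, 0 < ρ n)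
    (m : Fin M → Fin d → ℝ) (S : Fin M → ℝ) :
    let cV : ℝ := 1 / (γ - 1)
    let p : ℝ → ℝ → ℝ := fun r s => r ^ γ * Real.exp (s / (cV * r))
    let ρavg : ℝ := (M : ℝ)⁻¹ * ∑ n, ρ n
    let mavg : Fin d → ℝ := fun i => (M : ℝ)⁻¹ * ∑ n, m n i
    let Savg : ℝ := (M : ℝ)⁻¹ * ∑ n, S n
    let RM : Matrix (Fin d) (Fin d) ℝ :=
      (M : ℝ)⁻¹ • (∑ n, Matrix.of fun i j => m n i * m n j / ρ n)
        + ((M : ℝ)⁻¹ * ∑ n, p (ρ n) (S n)) • (1 : Matrix (Fin d) (Fin d) ℝ)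
        - Matrix.of (fun i j => mavg i * mavg j / ρavg)
        - p ρavg Savg • (1 : Matrix (Fin d) (Fin d) ℝ)
    let EM : ℝ :=
      (M : ℝ)⁻¹ * ∑ n, ((∑ i, (m n i) ^ 2) / (2 * ρ n)
          + cV * (ρ n) ^ γ * Real.exp (S n / (cV * ρ n)))
        - (∑ i, (mavg i) ^ 2) / (2 * ρavg)
        - cV * ρavg ^ γ * Real.exp (Savg / (cV * ρavg))
    min 2 ((d : ℝ) * (γ - 1)) * EM ≤ Matrix.trace RM ∧
      Matrix.trace RM ≤ max 2 ((d : ℝ) * (γ - 1)) * EM :=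
  stmt9_general γ hγ d M hM ρ hρ m S
end
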